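/- Suppose M_r ∈ ℝ^{ρ_r×p} and M_c ∈ ℝ^{n×ρ_c} satisfy the RIP with constant δ ∈ (0,1): (1−δ)‖Y‖_F² ≤ (np/(ρ_r ρ_c)) ‖M_r Y M_c‖_F² ≤ (1+δ)‖Y‖_F² for all Y ∈ LR(P_{k_r}, Q_{k_c}). Assume λ_{k_c+1} > 0 and λ_{k_r+1} > 0, let γ > 0, and set γ̄_c = γ/λ_{k_c+1}, γ̄_r = γ/λ_{k_r+1}. Let X̄ ∈ LR(P_{k_r}, Q_{k_c}), Ẽ ∈ ℝ^{ρ_r×ρ_c}, X̃ = M_r X̄ M_c + Ẽ, and let X* be a minimizer over X ∈ ℝ^{p×n} of ‖M_r X M_c − X̃‖_F² + γ̄_c tr(X L_c X^⊤) + γ̄_r tr(X^⊤ L_r X). With X̄* = P_{k_r} P_{k_r}^⊤ X* Q_{k_c} Q_{k_c}^⊤ (the orthogonal projection of X* onto LR(P_{k_r}, Q_{k_c})), one has ‖X̄* − X̄‖_F ≤ √(np/(ρ_c ρ_r (1−δ))) [ (2 + 1/√(2γ)) ‖Ẽ‖_F + (1/√2 + √γ) √(λ_{k_c}/λ_{k_c+1}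 + λ_{k_r}/λ_{k_r+1}) ‖X̄‖_F ]. -/

import Mathlib

open Matrix

/-- Frobenius norm of a real matrix. -/
noncomputable def frobNorm {m n : Type*} [Fintype m] [Fintype n] (A : Matrix m n ℝ) : ℝ :=
  Real.sqrt (∑ i, ∑ j, (A i j) ^ 2)

/-- Euclidean norm of a real vector. -/
noncomputable def vecNorm {n : Type*} [Fintype n] (x : n → ℝ) : ℝ :=
  Real.sqrt (∑ i, (x i) ^ 2)

/-- A row-selection matrix: its rows are distinct standard basis vectors of `ℝ^p`. -/
def IsRowSelection {ρ p : ℕ} (M : Matrix (Fin ρ) (Fin p) ℝ) : Prop :=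
  ∃ f : Fin ρ → Fin p, Function.Injective f ∧ ∀ i j, M i j = if j = f i then 1 else 0

/-- A column-selection matrix: its columns are distinct standard basis vectors of `ℝ^n`. -/
def IsColSelection {n ρ : ℕ} (M : Matrix (Fin n) (Fin ρ) ℝ) : Prop :=
  ∃ f : Fin ρ → Fin n, Function.Injective f ∧ ∀ i j, M i j = if i = f j then 1 else 0

/-- `y` lies in the span of the columns of `P`. -/
def inColSpan {p k : ℕ} (P : Matrix (Fin p) (Fin k) ℝ) (y : Fin p → ℝ) : Prop :=
  ∃ c : Fin k → ℝ, y = P.mulVec c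

/-- `Y ∈ LR(P, Q)`: every column of `Y` lies in the column span of `P` and every row of `Y`
lies in the column span of `Q`. -/
def memLR {p n kr kc : ℕ} (P : Matrix (Fin p) (Fin kr) ℝ) (Q : Matrix (Fin n) (Fin kc) ℝ)
    (Y : Matrix (Fin p) (Fin n) ℝ) : Prop :=
  (∀ j, inColSpan P (fun i => Y i j)) ∧ (∀ i, inColSpan Q (fun j => Y i j))

/-- Graph cumulative coherence `ν = max_i √n ‖Q^⊤ e_i‖₂`. -/
noncomputable def coherence {n k : ℕ} (Q : Matrix (Fin n) (Fin k) ℝ) : ℝ :=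
  ⨆ i : Fin n, Real.sqrt n * vecNorm (fun j => Q i j)

/-!
In the eigenbases `P`, `Q` the Dirichlet energy `E(X) = γ_c tr(X L_c Xᵀ) + γ_r tr(Xᵀ L_r X)` is
the weighted sum `∑ (γ_c λ_j + γ_r λ_i) (Pᵀ X Q)_{ij}²`. Its weights are at most
`γ (λ_{k_c}/λ_{k_c+1} + λ_{k_r}/λ_{k_r+1})` on the low-frequency block, which carries `X̄`, and at
least `γ` off it. Writing `X* = X̄ + D`, optimality of `X*` on the line through `X̄` and `X*`
gives, after completing squares,
`‖M_r D M_c - Ẽ/2‖² + E(X* - X̄/2) ≤ (‖Ẽ‖² + E(X̄)) / 4`.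
So the energy controls the high-frequency part `X* - X̄*`, while `X̄* - X̄` lies in
`LR(P_{k_r}, Q_{k_c})`, where the RIP bounds it by its samples
`M_r D M_c - M_r (X* - X̄*) M_c`.
-/

theorem two_mul_add_eq_zero_of_forall_le {a b : ℝ} (h : ∀ τ : ℝ, a + b ≤ a * τ ^ 2 + b * τ) :
    2 * a + b = 0 := by
  have ha : 0 ≤ a := by linarith [h 0, h 2]
  have := h (1 - (2 * a + b) / (a + 1))
  have hpos : 0 < a + 1 := by linarith
  field_simp at this
  nlinarith [sq_nonneg (2 * a + b)]

theorem LinearMap.BilinForm.completed_square_le_of_minimizer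
    {E F : Type*} [AddCommGroup E] [Module ℝ E] [AddCommGroup F] [Module ℝ F]
    (C : LinearMap.BilinForm ℝ F) (B : LinearMap.BilinForm ℝ E) (A : E →ₗ[ℝ] F)
    {xbar xs : E} {e : F}
    (hmin : ∀ x, C (A xs - (A xbar + e)) (A xs - (A xbar + e)) + B xs xs ≤
      C (A x - (A xbar + e)) (A x - (A xbar + e)) + B x x) :
    C (A (xs - xbar) - (2⁻¹ : ℝ) • e) (A (xs - xbar) - (2⁻¹ : ℝ) • e) +
        B (xs - (2⁻¹ : ℝ) • xbar) (xs - (2⁻¹ : ℝ) • xbar) ≤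
      (C e e + B xbar xbar) / 4 := by
  set d := xs - xbar
  have hxs : xs = xbar + d := by simp [d]
  -- the objective on the line `τ ↦ xbar + τ • d` is a quadratic in `τ` minimal at `τ = 1`
  have hline : ∀ τ : ℝ, (C (A d) (A d) + B d d) + (B xbar d + B d xbar - C (A d) e - C e (A d))
      ≤ (C (A d) (A d) + B d d) * τ ^ 2 + (B xbar d + B d xbar - C (A d) e - C e (A d)) * τ := by
    intro τ
    have := hmin (xbar + τ • d)
    simp only [hxs, map_add, map_sub, map_smul, LinearMap.add_apply, LinearMap.sub_apply,
      LinearMap.smul_apply, smul_eq_mul, add_sub_add_left_eq_sub] at this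
    linear_combination this
  have hcrit := two_mul_add_eq_zero_of_forall_le hline
  have hsplit : xs - (2⁻¹ : ℝ) • xbar = d + (2⁻¹ : ℝ) • xbar := by rw [hxs]; module
  rw [hsplit]
  simp only [map_add, map_sub, map_smul, LinearMap.add_apply, LinearMap.sub_apply,
    LinearMap.smul_apply, smul_eq_mul]
  linear_combination hcrit / 2

theorem le_sqrt_div_mul_of_mul_sq_le {a b K δ : ℝ} (hδ : δ < 1) (ha : 0 ≤ a) (hb : 0 ≤ b)
    (h : (1 - δ) * a ^ 2 ≤ K * b ^ 2) : a ≤ √(K / (1 - δ)) * b := by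
  rw [← Real.sqrt_sq ha, ← Real.sqrt_sq hb, ← Real.sqrt_mul' _ (sq_nonneg b)]
  refine Real.sqrt_le_sqrt ?_
  rw [div_mul_eq_mul_div, le_div_iff₀ (by linarith)]
  linarith

theorem add_le_of_sq_add_mul_sq_le {γ e x s α u v : ℝ} (hγ : 0 < γ) (he : 0 ≤ e) (hx : 0 ≤ x)
    (hs : 0 ≤ s) (hα : 0 ≤ α) (hv : 0 ≤ v) (hu : u ≤ 2⁻¹ * e + α)
    (h : α ^ 2 + γ * v ^ 2 ≤ (e ^ 2 + γ * s * x ^ 2) / 4) :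
    u + v ≤ (2 + 1 / √(2 * γ)) * e + (1 / √2 + √γ) * √s * x := by
  have hg : 0 < √γ := Real.sqrt_pos.mpr hγ
  have hr : 0 < √2 := by positivity
  have hr2 : √2 ≤ 2 := by
    rw [Real.sqrt_le_left (by norm_num)]; norm_num
  set R := (e + √γ * √s * x) / 2
  have hR : 0 ≤ R := by positivity
  have hRsq : (e ^ 2 + γ * s * x ^ 2) / 4 ≤ R ^ 2 := by
    have hcross : 0 ≤ e * (√γ * √s * x) := by positivity
    have hgs : (√γ * √s * x) ^ 2 = γ * s * x ^ 2 := by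
      rw [mul_pow, mul_pow, Real.sq_sqrt hγ.le, Real.sq_sqrt hs]
    simp only [R]
    nlinarith
  have hαR : α ≤ R := by
    refine (pow_le_pow_iff_left₀ hα hR two_ne_zero).mp ?_
    nlinarith [sq_nonneg v]
  have hvR : v ≤ R / √γ := by
    rw [le_div_iff₀ hg, mul_comm]
    refine (pow_le_pow_iff_left₀ (by positivity) hR two_ne_zero).mp ?_
    rw [mul_pow, Real.sq_sqrt hγ.le]
    nlinarith [sq_nonneg α]
  have hcoef_e : 1 / (2 * √γ) ≤ 1 / √(2 * γ) := by
    rw [Real.sqrt_mul zero_le_two]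
    exact one_div_le_one_div_of_le (by positivity) (by nlinarith)
  have hcoef_x : 1 / 2 ≤ 1 / √2 := one_div_le_one_div_of_le hr hr2
  have hσx : 0 ≤ √s * x := by positivity
  calc u + v ≤ R + e / 2 + R / √γ := by linarith
    _ = e + 1 / (2 * √γ) * e + (1 / 2 + √γ / 2) * √s * x := by field_simp; ring
    _ ≤ _ := by nlinarith [mul_le_mul_of_nonneg_right hcoef_e he,
          mul_le_mul_of_nonneg_right hcoef_x hσx, mul_nonneg hg.le hσx]

section Frobenius

variable {m n : Type*} [Fintype m] [Fintype n]

theorem frobNorm_nonneg (A : Matrix m n ℝ) : 0 ≤ frobNorm A := Real.sqrt_nonneg _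

theorem frobNorm_sq (A : Matrix m n ℝ) : frobNorm A ^ 2 = ∑ i, ∑ j, A i j ^ 2 :=
  Real.sq_sqrt (by positivity)

theorem frobNorm_sq_eq_trace (A : Matrix m n ℝ) : frobNorm A ^ 2 = trace (A * Aᵀ) := by
  rw [frobNorm_sq]
  simp [trace, mul_apply, sq]

attribute [local instance] Matrix.frobeniusNormedAddCommGroup Matrix.frobeniusNormedSpace

theorem frobNorm_eq_norm (A : Matrix m n ℝ) : frobNorm A = ‖A‖ := by
  simp [frobNorm, Matrix.frobenius_norm_def, Real.sqrt_eq_rpow]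

theorem frobNorm_le_add_sub (A B : Matrix m n ℝ) :
    frobNorm A ≤ frobNorm B + frobNorm (A - B) := by
  simpa only [frobNorm_eq_norm] using norm_le_norm_add_norm_sub' A B

theorem frobNorm_sub_le (A B : Matrix m n ℝ) : frobNorm (A - B) ≤ frobNorm A + frobNorm B := by
  simpa only [frobNorm_eq_norm] using norm_sub_le A B

theorem frobNorm_smul (c : ℝ) (A : Matrix m n ℝ) : frobNorm (c • A) = |c| * frobNorm A := by
  simp only [frobNorm_eq_norm, norm_smul, Real.norm_eq_abs]

theorem frobNorm_transpose (A : Matrix m n ℝ) : frobNorm Aᵀ = frobNorm A := by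
  simp only [frobNorm_eq_norm, Matrix.frobenius_norm_transpose]

theorem trace_transpose_mul_mul_of_mul_transpose [DecidableEq m] {P : Matrix m m ℝ}
    (hP : P * Pᵀ = 1) (M : Matrix m m ℝ) : trace (Pᵀ * M * P) = trace M := by
  rw [trace_mul_cycle, hP, Matrix.one_mul]

theorem frobNorm_transpose_mul_mul [DecidableEq m] [DecidableEq n] {P : Matrix m m ℝ}
    {Q : Matrix n n ℝ} (hP : Pᵀ * P = 1) (hQ : Qᵀ * Q = 1) (X : Matrix m n ℝ) :
    frobNorm (Pᵀ * X * Q) = frobNorm X := by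
  have hconj : Pᵀ * X * Q * (Pᵀ * X * Q)ᵀ = Pᵀ * (X * (Q * Qᵀ) * Xᵀ) * P := by
    simp only [transpose_mul, transpose_transpose, Matrix.mul_assoc]
  have h : frobNorm (Pᵀ * X * Q) ^ 2 = frobNorm X ^ 2 := by
    rw [frobNorm_sq_eq_trace, frobNorm_sq_eq_trace, hconj,
      trace_transpose_mul_mul_of_mul_transpose (mul_eq_one_comm.mp hP),
      mul_eq_one_comm.mp hQ, Matrix.mul_one]
  exact (pow_left_inj₀ (frobNorm_nonneg _) (frobNorm_nonneg _) two_ne_zero).mp h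

end Frobenius

section Selection

variable {ρ ρr ρc p n : ℕ}

theorem IsRowSelection.mul_apply {ι : Type*} {M : Matrix (Fin ρ) (Fin p) ℝ} {f : Fin ρ → Fin p}
    (hf : ∀ i j, M i j = if j = f i then 1 else 0) (Y : Matrix (Fin p) ι ℝ) (a : Fin ρ) (j : ι) :
    (M * Y) a j = Y (f a) j := by
  simp [Matrix.mul_apply, hf]

theorem IsRowSelection.frobNorm_mul_le {ι : Type*} [Fintype ι] {M : Matrix (Fin ρ) (Fin p) ℝ}
    (hM : IsRowSelection M) (Y : Matrix (Fin p) ι ℝ) : frobNorm (M * Y) ≤ frobNorm Y := by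
  obtain ⟨f, hinj, hf⟩ := hM
  refine Real.sqrt_le_sqrt ?_
  simp only [IsRowSelection.mul_apply hf]
  exact (Finset.sum_map Finset.univ ⟨f, hinj⟩ (fun i => ∑ j, Y i j ^ 2)).symm.le.trans
    (Finset.sum_le_univ_sum_of_nonneg fun i => by positivity)

theorem IsColSelection.transpose {M : Matrix (Fin n) (Fin ρ) ℝ} (hM : IsColSelection M) :
    IsRowSelection Mᵀ := by
  obtain ⟨f, hinj, hf⟩ := hM
  exact ⟨f, hinj, fun i j => hf j i⟩

theorem frobNorm_selection_le {Mr : Matrix (Fin ρr) (Fin p) ℝ} {Mc : Matrix (Fin n) (Fin ρc) ℝ}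
    (hMr : IsRowSelection Mr) (hMc : IsColSelection Mc) (Y : Matrix (Fin p) (Fin n) ℝ) :
    frobNorm (Mr * Y * Mc) ≤ frobNorm Y :=
  calc frobNorm (Mr * Y * Mc) = frobNorm (Mcᵀ * (Mr * Y)ᵀ) := by
        rw [← transpose_mul, frobNorm_transpose]
    _ ≤ frobNorm (Mr * Y) := by
        rw [← frobNorm_transpose (Mr * Y)]; exact hMc.transpose.frobNorm_mul_le _
    _ ≤ frobNorm Y := hMr.frobNorm_mul_le Y

theorem frobNorm_selection_sub_le {Mr : Matrix (Fin ρr) (Fin p) ℝ}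
    {Mc : Matrix (Fin n) (Fin ρc) ℝ} (hMr : IsRowSelection Mr) (hMc : IsColSelection Mc)
    (X Y Z : Matrix (Fin p) (Fin n) ℝ) :
    frobNorm (Mr * (Y - X) * Mc) ≤ frobNorm (Mr * (Z - X) * Mc) + frobNorm (Z - Y) := by
  have h : Mr * (Y - X) * Mc = Mr * (Z - X) * Mc - Mr * (Z - Y) * Mc := by
    simp only [Matrix.mul_sub, Matrix.sub_mul]; abel
  rw [h]
  exact (frobNorm_sub_le _ _).trans (add_le_add le_rfl (frobNorm_selection_le hMr hMc _))

end Selection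

section Forms

variable {l m n o : Type*} [Fintype m] [Fintype n]

def mulLeftRightLinearMap (A : Matrix l m ℝ) (B : Matrix n o ℝ) :
    Matrix m n ℝ →ₗ[ℝ] Matrix l o ℝ where
  toFun X := A * X * B
  map_add' X Y := by simp only [Matrix.mul_add, Matrix.add_mul]
  map_smul' c X := by simp only [Matrix.mul_smul, Matrix.smul_mul, RingHom.id_apply]

@[simp]
theorem mulLeftRightLinearMap_apply (A : Matrix l m ℝ) (B : Matrix n o ℝ) (X : Matrix m n ℝ) :
    mulLeftRightLinearMap A B X = A * X * B := rfl

def frobeniusForm : LinearMap.BilinForm ℝ (Matrix m n ℝ) :=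
  LinearMap.mk₂ ℝ (fun X Y => trace (X * Yᵀ))
    (fun X X' Y => by simp only [Matrix.add_mul, trace_add])
    (fun c X Y => by simp only [Matrix.smul_mul, trace_smul, smul_eq_mul])
    (fun X Y Y' => by simp only [transpose_add, Matrix.mul_add, trace_add])
    (fun c X Y => by simp only [transpose_smul, Matrix.mul_smul, trace_smul, smul_eq_mul])

theorem frobNorm_sq_eq_frobeniusForm (A : Matrix m n ℝ) : frobNorm A ^ 2 = frobeniusForm A A :=
  frobNorm_sq_eq_trace A

def dirichletForm (Lr : Matrix m m ℝ) (Lc : Matrix n n ℝ) (γr γc : ℝ) :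
    LinearMap.BilinForm ℝ (Matrix m n ℝ) :=
  LinearMap.mk₂ ℝ (fun X Y => γc * trace (X * Lc * Yᵀ) + γr * trace (Xᵀ * Lr * Y))
    (fun X X' Y => by simp only [Matrix.add_mul, transpose_add, trace_add]; ring)
    (fun c X Y => by
      simp only [Matrix.smul_mul, transpose_smul, trace_smul, smul_eq_mul]; ring)
    (fun X Y Y' => by simp only [transpose_add, Matrix.mul_add, trace_add]; ring)
    (fun c X Y => by
      simp only [transpose_smul, Matrix.mul_smul, trace_smul, smul_eq_mul]; ring)

theorem dirichletForm_apply (Lr : Matrix m m ℝ) (Lc : Matrix n n ℝ) (γr γc : ℝ)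
    (X Y : Matrix m n ℝ) :
    dirichletForm Lr Lc γr γc X Y = γc * trace (X * Lc * Yᵀ) + γr * trace (Xᵀ * Lr * Y) :=
  rfl

end Forms

structure IsOrthonormalEigenbasis {m : Type*} [Fintype m] [DecidableEq m]
    (L P : Matrix m m ℝ) (ev : m → ℝ) : Prop where
  transpose_mul_self : Pᵀ * P = 1
  mul_eq_mul_diagonal : L * P = P * diagonal ev

namespace IsOrthonormalEigenbasis

variable {m : Type*} [Fintype m] [DecidableEq m] {L P : Matrix m m ℝ} {ev : m → ℝ}

theorem mul_transpose_self (h : IsOrthonormalEigenbasis L P ev) : P * Pᵀ = 1 :=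
  mul_eq_one_comm.mp h.transpose_mul_self

theorem eq_conj (h : IsOrthonormalEigenbasis L P ev) : L = P * diagonal ev * Pᵀ := by
  rw [← h.mul_eq_mul_diagonal, Matrix.mul_assoc, h.mul_transpose_self, Matrix.mul_one]

theorem transpose_mul_mul (h : IsOrthonormalEigenbasis L P ev) : Pᵀ * L * P = diagonal ev := by
  rw [Matrix.mul_assoc, h.mul_eq_mul_diagonal, ← Matrix.mul_assoc, h.transpose_mul_self,
    Matrix.one_mul]

theorem eigenvalue_nonneg (h : IsOrthonormalEigenbasis L P ev) (hL : L.PosSemidef) (i : m) :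
    0 ≤ ev i := by
  have hdiag := hL.conjTranspose_mul_mul_same P
  rw [conjTranspose_eq_transpose_of_trivial, h.transpose_mul_mul, posSemidef_diagonal_iff]
    at hdiag
  exact hdiag i

end IsOrthonormalEigenbasis

section Trace

variable {m n : Type*} [Fintype m] [Fintype n]

theorem trace_mul_diagonal_mul_transpose [DecidableEq n] (Y : Matrix m n ℝ) (d : n → ℝ) :
    trace (Y * diagonal d * Yᵀ) = ∑ i, ∑ j, d j * Y i j ^ 2 := by
  simp only [trace, diag_apply, Matrix.mul_apply, diagonal_apply, mul_ite, mul_zero,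
    Finset.sum_ite_eq', Finset.mem_univ, ↓reduceIte, transpose_apply, sq]
  exact Finset.sum_congr rfl fun i _ => Finset.sum_congr rfl fun j _ => by ring

theorem trace_transpose_mul_diagonal_mul [DecidableEq m] (Y : Matrix m n ℝ) (d : m → ℝ) :
    trace (Yᵀ * diagonal d * Y) = ∑ i, ∑ j, d i * Y i j ^ 2 := by
  simpa only [transpose_transpose, transpose_apply, Finset.sum_comm (γ := m)] using
    trace_mul_diagonal_mul_transpose Yᵀ d

theorem dirichletForm_self_eq_sum [DecidableEq m] [DecidableEq n] {Lr P : Matrix m m ℝ}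
    {Lc Q : Matrix n n ℝ} {evr : m → ℝ} {evc : n → ℝ} (hP : IsOrthonormalEigenbasis Lr P evr)
    (hQ : IsOrthonormalEigenbasis Lc Q evc) (γr γc : ℝ) (X : Matrix m n ℝ) :
    dirichletForm Lr Lc γr γc X X =
      ∑ i, ∑ j, (γc * evc j + γr * evr i) * (Pᵀ * X * Q) i j ^ 2 := by
  have hcol : trace (X * Lc * Xᵀ) = trace (Pᵀ * X * Q * diagonal evc * (Pᵀ * X * Q)ᵀ) := by
    rw [← trace_transpose_mul_mul_of_mul_transpose hP.mul_transpose_self, hQ.eq_conj]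
    simp only [transpose_mul, transpose_transpose, Matrix.mul_assoc]
  have hrow : trace (Xᵀ * Lr * X) = trace ((Pᵀ * X * Q)ᵀ * diagonal evr * (Pᵀ * X * Q)) := by
    rw [← trace_transpose_mul_mul_of_mul_transpose hQ.mul_transpose_self, hP.eq_conj]
    simp only [transpose_mul, transpose_transpose, Matrix.mul_assoc]
  rw [dirichletForm_apply, hcol, hrow, trace_mul_diagonal_mul_transpose,
    trace_transpose_mul_diagonal_mul]
  simp only [Finset.mul_sum, ← Finset.sum_add_distrib]
  exact Finset.sum_congr rfl fun i _ => Finset.sum_congr rfl fun j _ => by ring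

end Trace

section WeightedSums

variable {m n : Type*} [Fintype m] [Fintype n] {w : m → n → ℝ} {S : m → n → Prop}
  [∀ i j, Decidable (S i j)] {c : ℝ}

theorem mul_sum_sq_ite_le_sum_mul_sq (hw : ∀ i j, 0 ≤ w i j) (hc : ∀ i j, ¬S i j → c ≤ w i j)
    (Y : Matrix m n ℝ) :
    c * ∑ i, ∑ j, (if S i j then 0 else Y i j) ^ 2 ≤ ∑ i, ∑ j, w i j * Y i j ^ 2 := by
  simp only [Finset.mul_sum]
  refine Finset.sum_le_sum fun i _ => Finset.sum_le_sum fun j _ => ?_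
  split_ifs with h
  · simpa using mul_nonneg (hw i j) (sq_nonneg (Y i j))
  · exact mul_le_mul_of_nonneg_right (hc i j h) (sq_nonneg _)

theorem sum_mul_sq_le_mul_sum_sq (hc : ∀ i j, S i j → w i j ≤ c) {Y : Matrix m n ℝ}
    (hY : ∀ i j, ¬S i j → Y i j = 0) :
    ∑ i, ∑ j, w i j * Y i j ^ 2 ≤ c * ∑ i, ∑ j, Y i j ^ 2 := by
  simp only [Finset.mul_sum]
  refine Finset.sum_le_sum fun i _ => Finset.sum_le_sum fun j _ => ?_
  by_cases h : S i j
  · exact mul_le_mul_of_nonneg_right (hc i j h) (sq_nonneg _)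
  · simp [hY i j h]

end WeightedSums

section LowRank

variable {p n kr kc : ℕ}

/-- The orthogonal projection onto `LR(P, Q)` when `P` and `Q` have orthonormal columns. -/
def projLR (P : Matrix (Fin p) (Fin kr) ℝ) (Q : Matrix (Fin n) (Fin kc) ℝ) :
    Matrix (Fin p) (Fin n) ℝ →ₗ[ℝ] Matrix (Fin p) (Fin n) ℝ :=
  mulLeftRightLinearMap (P * Pᵀ) (Q * Qᵀ)

theorem projLR_apply (P : Matrix (Fin p) (Fin kr) ℝ) (Q : Matrix (Fin n) (Fin kc) ℝ)
    (X : Matrix (Fin p) (Fin n) ℝ) : projLR P Q X = P * Pᵀ * X * (Q * Qᵀ) :=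
  rfl

theorem memLR_projLR (P : Matrix (Fin p) (Fin kr) ℝ) (Q : Matrix (Fin n) (Fin kc) ℝ)
    (X : Matrix (Fin p) (Fin n) ℝ) : memLR P Q (projLR P Q X) := by
  refine ⟨fun j => ⟨fun a => (Pᵀ * X * (Q * Qᵀ)) a j, ?_⟩,
    fun i => ⟨fun b => (P * Pᵀ * X * Q) i b, ?_⟩⟩ <;> ext
  · simp only [projLR_apply, Matrix.mul_assoc]; simp [mulVec, dotProduct, Matrix.mul_apply]
  · rw [projLR_apply, ← Matrix.mul_assoc]; simp [mulVec, dotProduct, Matrix.mul_apply, mul_comm]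

theorem memLR.sub {P : Matrix (Fin p) (Fin kr) ℝ} {Q : Matrix (Fin n) (Fin kc) ℝ}
    {X Y : Matrix (Fin p) (Fin n) ℝ} (hX : memLR P Q X) (hY : memLR P Q Y) :
    memLR P Q (X - Y) := by
  refine ⟨fun j => ?_, fun i => ?_⟩
  · obtain ⟨c, hc⟩ := hX.1 j
    obtain ⟨d, hd⟩ := hY.1 j
    exact ⟨c - d, by ext i; simp [mulVec_sub, congrFun hc i, congrFun hd i]⟩
  · obtain ⟨c, hc⟩ := hX.2 i
    obtain ⟨d, hd⟩ := hY.2 i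
    exact ⟨c - d, by ext j; simp [mulVec_sub, congrFun hc j, congrFun hd j]⟩

theorem memLR.exists_eq_mul {P : Matrix (Fin p) (Fin kr) ℝ} {Q : Matrix (Fin n) (Fin kc) ℝ}
    {Y : Matrix (Fin p) (Fin n) ℝ} (hY : memLR P Q Y) :
    (∃ C : Matrix (Fin kr) (Fin n) ℝ, Y = P * C) ∧ ∃ R : Matrix (Fin p) (Fin kc) ℝ, Y = R * Qᵀ := by
  choose c hc using hY.1
  choose r hr using hY.2
  refine ⟨⟨of fun a j => c j a, ?_⟩, ⟨of fun i b => r i b, ?_⟩⟩ <;> ext i j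
  · simp [congrFun (hc j) i, mulVec, dotProduct, Matrix.mul_apply]
  · simp [congrFun (hr i) j, mulVec, dotProduct, Matrix.mul_apply, mul_comm]

theorem memLR.projLR_eq_self {P : Matrix (Fin p) (Fin kr) ℝ} {Q : Matrix (Fin n) (Fin kc) ℝ}
    (hP : Pᵀ * P = 1) (hQ : Qᵀ * Q = 1) {Y : Matrix (Fin p) (Fin n) ℝ} (hY : memLR P Q Y) :
    projLR P Q Y = Y := by
  obtain ⟨⟨C, hC⟩, ⟨R, hR⟩⟩ := hY.exists_eq_mul
  calc projLR P Q Y = P * (Pᵀ * P) * C * (Q * Qᵀ) := by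
        rw [projLR_apply, hC]; simp only [Matrix.mul_assoc]
    _ = R * (Qᵀ * Q) * Qᵀ := by rw [hP, Matrix.mul_one, ← hC, hR]; simp only [Matrix.mul_assoc]
    _ = Y := by rw [hQ, Matrix.mul_one, hR]

theorem transpose_mul_submatrix_castLE {P : Matrix (Fin p) (Fin p) ℝ} (hP : Pᵀ * P = 1)
    (hk : kr ≤ p) :
    Pᵀ * P.submatrix id (Fin.castLE hk) =
      (1 : Matrix (Fin p) (Fin p) ℝ).submatrix id (Fin.castLE hk) := by
  rw [← hP]; ext; simp [Matrix.mul_apply]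

theorem submatrix_castLE_transpose_mul_self {P : Matrix (Fin p) (Fin p) ℝ} (hP : Pᵀ * P = 1)
    (hk : kr ≤ p) : (P.submatrix id (Fin.castLE hk))ᵀ * P.submatrix id (Fin.castLE hk) = 1 := by
  rw [transpose_submatrix, ← submatrix_mul _ _ _ _ _ Function.bijective_id, hP]
  exact submatrix_one _ (Fin.castLE_injective hk)

theorem transpose_mul_submatrix_castLE_mul_transpose_mul {P : Matrix (Fin p) (Fin p) ℝ}
    (hP : Pᵀ * P = 1) (hk : kr ≤ p) :
    Pᵀ * (P.submatrix id (Fin.castLE hk) * (P.submatrix id (Fin.castLE hk))ᵀ) * P =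
      diagonal fun i : Fin p => if (i : ℕ) < kr then (1 : ℝ) else 0 := by
  rw [show Pᵀ * (P.submatrix id (Fin.castLE hk) * (P.submatrix id (Fin.castLE hk))ᵀ) * P =
      Pᵀ * P.submatrix id (Fin.castLE hk) * (Pᵀ * P.submatrix id (Fin.castLE hk))ᵀ by
    simp only [transpose_mul, transpose_transpose, Matrix.mul_assoc],
    transpose_mul_submatrix_castLE hP hk]
  ext a b
  rcases lt_or_ge (a : ℕ) kr with ha | ha
  · rw [Matrix.mul_apply, Finset.sum_eq_single ⟨a, ha⟩]
    · simp [one_apply, diagonal_apply, ha, eq_comm]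
    · intro c _ hc
      have hca : (c : ℕ) ≠ a := fun h => hc (Fin.ext h)
      simp [one_apply, Fin.ext_iff, hca.symm]
    · simp
  · have hc (c : Fin kr) : (a : ℕ) ≠ c := by omega
    simp [Matrix.mul_apply, one_apply, diagonal_apply, Fin.ext_iff, hc, not_lt.mpr ha]

end LowRank

section SpectralBounds

variable {p n kr kc : ℕ} {Lr P : Matrix (Fin p) (Fin p) ℝ} {Lc Q : Matrix (Fin n) (Fin n) ℝ}
  {evr : Fin p → ℝ} {evc : Fin n → ℝ} {Pk : Matrix (Fin p) (Fin kr) ℝ}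
  {Qk : Matrix (Fin n) (Fin kc) ℝ}

theorem transpose_mul_projLR_mul_apply (hP : Pᵀ * P = 1) (hQ : Qᵀ * Q = 1) (hkr : kr ≤ p)
    (hkc : kc ≤ n) (hPk : Pk = P.submatrix id (Fin.castLE hkr))
    (hQk : Qk = Q.submatrix id (Fin.castLE hkc)) (X : Matrix (Fin p) (Fin n) ℝ) (i : Fin p)
    (j : Fin n) :
    (Pᵀ * projLR Pk Qk X * Q) i j =
      if (i : ℕ) < kr ∧ (j : ℕ) < kc then (Pᵀ * X * Q) i j else 0 := by
  have hsplit : Pᵀ * projLR Pk Qk X * Q =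
      Pᵀ * (Pk * Pkᵀ) * P * (Pᵀ * X * Q) * (Qᵀ * (Qk * Qkᵀ) * Q) := by
    calc _ = Pᵀ * (Pk * Pkᵀ) * (P * Pᵀ) * X * (Q * Qᵀ) * (Qk * Qkᵀ) * Q := by
          rw [projLR_apply, mul_eq_one_comm.mp hP, mul_eq_one_comm.mp hQ]
          simp only [Matrix.mul_one, Matrix.mul_assoc]
      _ = _ := by simp only [Matrix.mul_assoc]
  rw [hsplit, hPk, hQk, transpose_mul_submatrix_castLE_mul_transpose_mul hP,
    transpose_mul_submatrix_castLE_mul_transpose_mul hQ, mul_diagonal, diagonal_mul]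
  split_ifs <;> simp_all

theorem mul_frobNorm_sub_projLR_sq_le_dirichletForm (hP : IsOrthonormalEigenbasis Lr P evr)
    (hQ : IsOrthonormalEigenbasis Lc Q evc) (hLr : Lr.PosSemidef) (hLc : Lc.PosSemidef)
    (hevr : Monotone evr) (hevc : Monotone evc) (hkr : kr < p) (hkc : kc < n)
    (hPk : Pk = P.submatrix id (Fin.castLE hkr.le)) (hQk : Qk = Q.submatrix id (Fin.castLE hkc.le))
    (hlamr : 0 < evr ⟨kr, hkr⟩) (hlamc : 0 < evc ⟨kc, hkc⟩) {γ : ℝ} (hγ : 0 ≤ γ)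
    (Z : Matrix (Fin p) (Fin n) ℝ) :
    γ * frobNorm (Z - projLR Pk Qk Z) ^ 2 ≤
      dirichletForm Lr Lc (γ / evr ⟨kr, hkr⟩) (γ / evc ⟨kc, hkc⟩) Z Z := by
  have hoff (i : Fin p) (j : Fin n) : (Pᵀ * (Z - projLR Pk Qk Z) * Q) i j =
      if (i : ℕ) < kr ∧ (j : ℕ) < kc then 0 else (Pᵀ * Z * Q) i j := by
    rw [Matrix.mul_sub, Matrix.sub_mul, Matrix.sub_apply, transpose_mul_projLR_mul_apply
      hP.transpose_mul_self hQ.transpose_mul_self hkr.le hkc.le hPk hQk]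
    split_ifs <;> simp
  have hr (i : Fin p) : 0 ≤ γ / evr ⟨kr, hkr⟩ * evr i :=
    mul_nonneg (div_nonneg hγ hlamr.le) (hP.eigenvalue_nonneg hLr i)
  have hc (j : Fin n) : 0 ≤ γ / evc ⟨kc, hkc⟩ * evc j :=
    mul_nonneg (div_nonneg hγ hlamc.le) (hQ.eigenvalue_nonneg hLc j)
  rw [dirichletForm_self_eq_sum hP hQ, ← frobNorm_transpose_mul_mul hP.transpose_mul_self
    hQ.transpose_mul_self, frobNorm_sq]
  simp only [hoff]
  refine mul_sum_sq_ite_le_sum_mul_sq (fun i j => add_nonneg (hc j) (hr i)) (fun i j hij => ?_) _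
  rcases not_and_or.mp hij with hi | hj
  · have : γ ≤ γ / evr ⟨kr, hkr⟩ * evr i := by
      rw [div_mul_eq_mul_div, le_div_iff₀ hlamr]
      exact mul_le_mul_of_nonneg_left (hevr (Fin.le_def.mpr (not_lt.mp hi))) hγ
    linarith [hc j]
  · have : γ ≤ γ / evc ⟨kc, hkc⟩ * evc j := by
      rw [div_mul_eq_mul_div, le_div_iff₀ hlamc]
      exact mul_le_mul_of_nonneg_left (hevc (Fin.le_def.mpr (not_lt.mp hj))) hγ
    linarith [hr i]

theorem dirichletForm_le_of_memLR (hP : IsOrthonormalEigenbasis Lr P evr)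
    (hQ : IsOrthonormalEigenbasis Lc Q evc) (hevr : Monotone evr) (hevc : Monotone evc)
    (hkr : kr < p) (hkc : kc < n) (hPk : Pk = P.submatrix id (Fin.castLE hkr.le))
    (hQk : Qk = Q.submatrix id (Fin.castLE hkc.le)) (hlamr : 0 < evr ⟨kr, hkr⟩)
    (hlamc : 0 < evc ⟨kc, hkc⟩) {γ : ℝ} (hγ : 0 ≤ γ) {X : Matrix (Fin p) (Fin n) ℝ}
    (hX : memLR Pk Qk X) :
    dirichletForm Lr Lc (γ / evr ⟨kr, hkr⟩) (γ / evc ⟨kc, hkc⟩) X X ≤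
      γ * (evc ⟨kc - 1, (kc.sub_le 1).trans_lt hkc⟩ / evc ⟨kc, hkc⟩ +
        evr ⟨kr - 1, (kr.sub_le 1).trans_lt hkr⟩ / evr ⟨kr, hkr⟩) * frobNorm X ^ 2 := by
  have hproj : projLR Pk Qk X = X := by
    subst hPk hQk
    exact hX.projLR_eq_self (submatrix_castLE_transpose_mul_self hP.transpose_mul_self hkr.le)
      (submatrix_castLE_transpose_mul_self hQ.transpose_mul_self hkc.le)
  have hoff (i : Fin p) (j : Fin n) (hij : ¬((i : ℕ) < kr ∧ (j : ℕ) < kc)) :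
      (Pᵀ * X * Q) i j = 0 := by
    rw [← hproj, transpose_mul_projLR_mul_apply hP.transpose_mul_self hQ.transpose_mul_self
      hkr.le hkc.le hPk hQk, if_neg hij]
  rw [dirichletForm_self_eq_sum hP hQ, ← frobNorm_transpose_mul_mul hP.transpose_mul_self
    hQ.transpose_mul_self, frobNorm_sq]
  refine sum_mul_sq_le_mul_sum_sq (fun i j hij => ?_) hoff
  have hc : γ / evc ⟨kc, hkc⟩ * evc j ≤
      γ * (evc ⟨kc - 1, (kc.sub_le 1).trans_lt hkc⟩ / evc ⟨kc, hkc⟩) := by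
    rw [← mul_div_right_comm, mul_div_assoc]
    exact mul_le_mul_of_nonneg_left (div_le_div_of_nonneg_right
      (hevc (Fin.le_def.mpr (Nat.le_sub_one_of_lt hij.2))) hlamc.le) hγ
  have hr : γ / evr ⟨kr, hkr⟩ * evr i ≤
      γ * (evr ⟨kr - 1, (kr.sub_le 1).trans_lt hkr⟩ / evr ⟨kr, hkr⟩) := by
    rw [← mul_div_right_comm, mul_div_assoc]
    exact mul_le_mul_of_nonneg_left (div_le_div_of_nonneg_right
      (hevr (Fin.le_def.mpr (Nat.le_sub_one_of_lt hij.1))) hlamr.le) hγ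
  linarith

theorem sq_add_mul_sq_le_of_minimizer (hP : IsOrthonormalEigenbasis Lr P evr)
    (hQ : IsOrthonormalEigenbasis Lc Q evc) (hLr : Lr.PosSemidef) (hLc : Lc.PosSemidef)
    (hevr : Monotone evr) (hevc : Monotone evc) (hkr : kr < p) (hkc : kc < n)
    (hPk : Pk = P.submatrix id (Fin.castLE hkr.le)) (hQk : Qk = Q.submatrix id (Fin.castLE hkc.le))
    (hlamr : 0 < evr ⟨kr, hkr⟩) (hlamc : 0 < evc ⟨kc, hkc⟩) {γ : ℝ} (hγ : 0 ≤ γ) {ρr ρc : ℕ}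
    (Mr : Matrix (Fin ρr) (Fin p) ℝ) (Mc : Matrix (Fin n) (Fin ρc) ℝ)
    {Xbar Xstar : Matrix (Fin p) (Fin n) ℝ} (hXbar : memLR Pk Qk Xbar)
    (Etil : Matrix (Fin ρr) (Fin ρc) ℝ)
    (hmin : ∀ X : Matrix (Fin p) (Fin n) ℝ,
      frobNorm (Mr * Xstar * Mc - (Mr * Xbar * Mc + Etil)) ^ 2 +
          dirichletForm Lr Lc (γ / evr ⟨kr, hkr⟩) (γ / evc ⟨kc, hkc⟩) Xstar Xstar ≤
        frobNorm (Mr * X * Mc - (Mr * Xbar * Mc + Etil)) ^ 2 +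
          dirichletForm Lr Lc (γ / evr ⟨kr, hkr⟩) (γ / evc ⟨kc, hkc⟩) X X) :
    frobNorm (Mr * (Xstar - Xbar) * Mc - (2⁻¹ : ℝ) • Etil) ^ 2 +
        γ * frobNorm (Xstar - projLR Pk Qk Xstar) ^ 2 ≤
      (frobNorm Etil ^ 2 + γ * (evc ⟨kc - 1, (kc.sub_le 1).trans_lt hkc⟩ / evc ⟨kc, hkc⟩ +
        evr ⟨kr - 1, (kr.sub_le 1).trans_lt hkr⟩ / evr ⟨kr, hkr⟩) * frobNorm Xbar ^ 2) / 4 := by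
  have hsq := frobeniusForm.completed_square_le_of_minimizer
    (dirichletForm Lr Lc (γ / evr ⟨kr, hkr⟩) (γ / evc ⟨kc, hkc⟩)) (mulLeftRightLinearMap Mr Mc)
    fun X => by
      simpa only [mulLeftRightLinearMap_apply, ← frobNorm_sq_eq_frobeniusForm] using hmin X
  simp only [mulLeftRightLinearMap_apply, ← frobNorm_sq_eq_frobeniusForm] at hsq
  have hlow := mul_frobNorm_sub_projLR_sq_le_dirichletForm hP hQ hLr hLc hevr hevc hkr hkc hPk
    hQk hlamr hlamc hγ (Xstar - (2⁻¹ : ℝ) • Xbar)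
  have hproj : projLR Pk Qk Xbar = Xbar := by
    subst hPk hQk
    exact hXbar.projLR_eq_self (submatrix_castLE_transpose_mul_self hP.transpose_mul_self hkr.le)
      (submatrix_castLE_transpose_mul_self hQ.transpose_mul_self hkc.le)
  rw [map_sub, map_smul, hproj, sub_sub_sub_cancel_right] at hlow
  linarith [dirichletForm_le_of_memLR hP hQ hevr hevc hkr hkc hPk hQk hlamr hlamc hγ hXbar]

end SpectralBounds

/-- The paper's 1-indexed `λ_{k_c}`, `λ_{k_c+1}` are `evc ⟨kc - 1, _⟩`, `evc ⟨kc, _⟩` here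
(similarly for `r`). -/
theorem alternate_decoder_bound
    (p n ρr ρc kr kc : ℕ) (hkr : kr < p) (hkc : kc < n)
    (Lr : Matrix (Fin p) (Fin p) ℝ) (Lc : Matrix (Fin n) (Fin n) ℝ)
    (hLr : Lr.PosSemidef) (hLc : Lc.PosSemidef)
    (evr : Fin p → ℝ) (evc : Fin n → ℝ) (hevr : Monotone evr) (hevc : Monotone evc)
    (P : Matrix (Fin p) (Fin p) ℝ) (Q : Matrix (Fin n) (Fin n) ℝ)
    (hPorth : Pᵀ * P = 1) (hQorth : Qᵀ * Q = 1)
    (hLrP : Lr * P = P * Matrix.diagonal evr)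
    (hLcQ : Lc * Q = Q * Matrix.diagonal evc)
    (Pkr : Matrix (Fin p) (Fin kr) ℝ) (hPkr : Pkr = P.submatrix id (Fin.castLE hkr.le))
    (Qkc : Matrix (Fin n) (Fin kc) ℝ) (hQkc : Qkc = Q.submatrix id (Fin.castLE hkc.le))
    (Mr : Matrix (Fin ρr) (Fin p) ℝ) (hMr : IsRowSelection Mr)
    (Mc : Matrix (Fin n) (Fin ρc) ℝ) (hMc : IsColSelection Mc)
    (δ : ℝ) (hδ : δ ∈ Set.Ioo (0 : ℝ) 1)
    (hRIP : ∀ Y : Matrix (Fin p) (Fin n) ℝ, memLR Pkr Qkc Y →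
      (1 - δ) * (frobNorm Y) ^ 2 ≤
        ((n : ℝ) * p / ((ρr : ℝ) * ρc)) * (frobNorm (Mr * Y * Mc)) ^ 2 ∧
      ((n : ℝ) * p / ((ρr : ℝ) * ρc)) * (frobNorm (Mr * Y * Mc)) ^ 2 ≤
        (1 + δ) * (frobNorm Y) ^ 2)
    (hlamc1 : 0 < evc ⟨kc, hkc⟩) (hlamr1 : 0 < evr ⟨kr, hkr⟩)
    (γ γc γr : ℝ) (hγ : 0 < γ)
    (hγc : γc = γ / evc ⟨kc, hkc⟩) (hγr : γr = γ / evr ⟨kr, hkr⟩)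
    (Xbar : Matrix (Fin p) (Fin n) ℝ) (hXbar : memLR Pkr Qkc Xbar)
    (Etil : Matrix (Fin ρr) (Fin ρc) ℝ)
    (Xtil : Matrix (Fin ρr) (Fin ρc) ℝ) (hXtil : Xtil = Mr * Xbar * Mc + Etil)
    (Xstar : Matrix (Fin p) (Fin n) ℝ)
    (hmin : ∀ X : Matrix (Fin p) (Fin n) ℝ,
      (frobNorm (Mr * Xstar * Mc - Xtil)) ^ 2 + γc * Matrix.trace (Xstar * Lc * Xstarᵀ)
        + γr * Matrix.trace (Xstarᵀ * Lr * Xstar) ≤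
      (frobNorm (Mr * X * Mc - Xtil)) ^ 2 + γc * Matrix.trace (X * Lc * Xᵀ)
        + γr * Matrix.trace (Xᵀ * Lr * X))
    (Xbarstar : Matrix (Fin p) (Fin n) ℝ)
    (hXbarstar : Xbarstar = Pkr * Pkrᵀ * Xstar * (Qkc * Qkcᵀ)) :
    frobNorm (Xbarstar - Xbar) ≤
      Real.sqrt ((n : ℝ) * p / ((ρc : ℝ) * ρr * (1 - δ))) *
        ((2 + 1 / Real.sqrt (2 * γ)) * frobNorm Etil +
          (1 / Real.sqrt 2 + Real.sqrt γ) *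
            Real.sqrt (evc ⟨kc - 1, by omega⟩ / evc ⟨kc, hkc⟩
              + evr ⟨kr - 1, by omega⟩ / evr ⟨kr, hkr⟩) * frobNorm Xbar) := by
  subst hγc hγr hXtil hXbarstar
  have hP : IsOrthonormalEigenbasis Lr P evr := ⟨hPorth, hLrP⟩
  have hQ : IsOrthonormalEigenbasis Lc Q evc := ⟨hQorth, hLcQ⟩
  have henergy := sq_add_mul_sq_le_of_minimizer hP hQ hLr hLc hevr hevc hkr hkc hPkr hQkc hlamr1
    hlamc1 hγ.le Mr Mc hXbar Etil fun X => by
      simpa only [dirichletForm_apply, add_assoc] using hmin X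
  have hrip := le_sqrt_div_mul_of_mul_sq_le hδ.2 (frobNorm_nonneg _) (frobNorm_nonneg _)
    (hRIP _ ((memLR_projLR Pkr Qkc Xstar).sub hXbar)).1
  rw [div_div, mul_comm (ρr : ℝ)] at hrip
  have hsample := frobNorm_selection_sub_le hMr hMc Xbar (projLR Pkr Qkc Xstar) Xstar
  have htri := frobNorm_le_add_sub (Mr * (Xstar - Xbar) * Mc) ((2⁻¹ : ℝ) • Etil)
  rw [frobNorm_smul, abs_of_pos (by norm_num)] at htri
  have hs : 0 ≤ evc ⟨kc - 1, by omega⟩ / evc ⟨kc, hkc⟩ + evr ⟨kr - 1, by omega⟩ / evr ⟨kr, hkr⟩ :=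
    add_nonneg (div_nonneg (hQ.eigenvalue_nonneg hLc _) hlamc1.le)
      (div_nonneg (hP.eigenvalue_nonneg hLr _) hlamr1.le)
  have hsum := add_le_of_sq_add_mul_sq_le hγ (frobNorm_nonneg Etil) (frobNorm_nonneg Xbar) hs
    (frobNorm_nonneg _) (frobNorm_nonneg _) htri henergy
  exact hrip.trans (mul_le_mul_of_nonneg_left (hsample.trans hsum) (Real.sqrt_nonneg _))
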